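/- arXiv:1412.1543 — 3 statements merged into one kernel-verified Lean document; each statement's English description precedes it below -/
import Mathlib

section
/- Fix Δ ∈ ℝ and let u and v be bounded vertices given by reals a_u, d_u, c_u, b_u and a_v, d_v, c_v, b_v (each satisfying a ≤ d, c ≤ b, a < c, d < b), such that the eight reals a_u, d_u, c_u, b_u, a_v, d_v, c_v, b_v are pairwise distinct and the four reals c_u − a_u, b_u − d_u, c_v − a_v, b_v − d_v are pairwise distinct. Then T̄_u ∩ T̄_v ≠ ∅ if and only if L_u ∩ S_{L_v} ≠ ∅ or L_v ∩ S_{L_u} ≠ ∅. -/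
open Set

/-- The shadow of a point `t`. -/
def ptShadow (t : ℝ × ℝ) : Set (ℝ × ℝ) :=
  {p : ℝ × ℝ | p.1 ≤ t.1 ∧ p.2 - p.1 ≤ t.2 - t.1}

/-- The shadow of a set of points. -/
def setShadow (L : Set (ℝ × ℝ)) : Set (ℝ × ℝ) := ⋃ t ∈ L, ptShadow t

/-- The trapezoid `T̄_u` of a bounded vertex `u` given by `a_u, d_u, c_u, b_u`. -/
def trapB (a d c b : ℝ) : Set (ℝ × ℝ) :=
  convexHull ℝ ({(a, 0), (d, 0), (c, 1), (b, 1)} : Set (ℝ × ℝ))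

/-- The segment `L_u` of a bounded vertex `u` (for the fixed parameter `Δ`). -/
def segB (Δ a d c b : ℝ) : Set (ℝ × ℝ) :=
  segment ℝ (a, Δ - (c - a)) (d, Δ - (b - d))

/-- The trapezoid `T̄_v` of an unbounded vertex `v` given by `a_v < b_v`. -/
def trapU (a b : ℝ) : Set (ℝ × ℝ) := segment ℝ (a, 0) (b, 1)

/-- The point `p_v` of an unbounded vertex `v` (for the fixed parameter `Δ`). -/
def ptU (Δ a b : ℝ) : ℝ × ℝ := (a, Δ - (b - a))

lemma halfspace_bound {a d c b α β γ : ℝ} {p : ℝ × ℝ}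
    (hp : p ∈ trapB a d c b)
    (h1 : α*a + β*0 ≤ γ) (h2 : α*d + β*0 ≤ γ)
    (h3 : α*c + β*1 ≤ γ) (h4 : α*b + β*1 ≤ γ) :
    α*p.1 + β*p.2 ≤ γ := by
  have hlin : IsLinearMap ℝ (fun q : ℝ × ℝ => α*q.1 + β*q.2) := by
    constructor
    · intro x y; simp [Prod.fst_add, Prod.snd_add]; ring
    · intro c x; simp [Prod.smul_fst, Prod.smul_snd, smul_eq_mul]; ring
  have hconv : Convex ℝ {q : ℝ × ℝ | α*q.1 + β*q.2 ≤ γ} := convex_halfSpace_le hlin γ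
  have hsub : ({(a,0),(d,0),(c,1),(b,1)} : Set (ℝ×ℝ)) ⊆ {q : ℝ×ℝ | α*q.1 + β*q.2 ≤ γ} := by
    intro q hq
    simp only [Set.mem_insert_iff, Set.mem_singleton_iff] at hq
    rcases hq with rfl|rfl|rfl|rfl <;> simp only [mem_setOf_eq] <;> linarith
  exact convexHull_min hsub hconv hp

lemma trapB_bounds {a d c b : ℝ} (had : a ≤ d) (hcb : c ≤ b) {p : ℝ × ℝ}
    (hp : p ∈ trapB a d c b) :
    0 ≤ p.2 ∧ p.2 ≤ 1 ∧ (1-p.2)*a + p.2*c ≤ p.1 ∧ p.1 ≤ (1-p.2)*d + p.2*b := by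
  have b1 := halfspace_bound (α := 0) (β := -1) (γ := 0) hp (by norm_num) (by norm_num)
    (by norm_num) (by norm_num)
  have b2 := halfspace_bound (α := 0) (β := 1) (γ := 1) hp (by norm_num) (by norm_num)
    (by norm_num) (by norm_num)
  have b3 := halfspace_bound (α := -1) (β := c - a) (γ := -a) hp (by linarith)
    (by linarith) (by linarith) (by linarith)
  have b4 := halfspace_bound (α := 1) (β := -(b - d)) (γ := d) hp (by linarith)
    (by linarith) (by linarith) (by linarith)
  refine ⟨by linarith, by linarith, by nlinarith, by nlinarith⟩

lemma mem_trapB_of {a d c b x y : ℝ} (had : a ≤ d) (hcb : c ≤ b)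
    (hy0 : 0 ≤ y) (hy1 : y ≤ 1)
    (hx1 : (1-y)*a + y*c ≤ x) (hx2 : x ≤ (1-y)*d + y*b) :
    (x, y) ∈ trapB a d c b := by
  have hlohi : (1-y)*a + y*c ≤ (1-y)*d + y*b := by nlinarith
  obtain ⟨l, hl0, hl1, hx⟩ : ∃ l, 0 ≤ l ∧ l ≤ 1 ∧
      (1-l)*((1-y)*a + y*c) + l*((1-y)*d + y*b) = x := by
    rcases eq_or_lt_of_le hlohi with heq|hlt
    · exact ⟨0, le_refl 0, zero_le_one, by rw [← heq] at hx2; norm_num; linarith⟩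
    · refine ⟨(x - ((1-y)*a + y*c))/(((1-y)*d + y*b) - ((1-y)*a + y*c)),
        div_nonneg (by linarith) (by linarith), ?_, ?_⟩
      · rw [div_le_one (by linarith)]; linarith
      · have := div_mul_cancel₀ (x - ((1-y)*a + y*c))
          (by linarith : (((1-y)*d + y*b) - ((1-y)*a + y*c)) ≠ 0)
        nlinarith [this]
  have hconv := convex_convexHull ℝ ({(a,0),(d,0),(c,1),(b,1)} : Set (ℝ×ℝ))
  have hA : ((a:ℝ), (0:ℝ)) ∈ trapB a d c b := subset_convexHull ℝ _ (by simp)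
  have hD : ((d:ℝ), (0:ℝ)) ∈ trapB a d c b := subset_convexHull ℝ _ (by simp)
  have hC : ((c:ℝ), (1:ℝ)) ∈ trapB a d c b := subset_convexHull ℝ _ (by simp)
  have hB : ((b:ℝ), (1:ℝ)) ∈ trapB a d c b := subset_convexHull ℝ _ (by simp)
  have hbot : (1-l) • ((a:ℝ), (0:ℝ)) + l • ((d:ℝ), (0:ℝ)) ∈ trapB a d c b :=
    hconv hA hD (by linarith) hl0 (by ring)
  have htop : (1-l) • ((c:ℝ), (1:ℝ)) + l • ((b:ℝ), (1:ℝ)) ∈ trapB a d c b :=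
    hconv hC hB (by linarith) hl0 (by ring)
  have hfin := hconv hbot htop (by linarith : (0:ℝ) ≤ 1 - y) hy0 (by ring)
  have hxy : ((x:ℝ), (y:ℝ)) =
      (1-y) • ((1-l) • ((a:ℝ), (0:ℝ)) + l • ((d:ℝ), (0:ℝ))) +
      y • ((1-l) • ((c:ℝ), (1:ℝ)) + l • ((b:ℝ), (1:ℝ))) := by
    simp only [Prod.smul_mk, Prod.mk_add_mk, Prod.mk.injEq, smul_eq_mul]
    constructor
    · nlinarith [hx]
    · ring
  rw [hxy]; exact hfin

lemma mem_segB_iff {Δ a d c b : ℝ} {p : ℝ × ℝ} :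
    p ∈ segB Δ a d c b ↔ ∃ s, 0 ≤ s ∧ s ≤ 1 ∧
      p.1 = (1-s)*a + s*d ∧ p.2 = (1-s)*(Δ-(c-a)) + s*(Δ-(b-d)) := by
  rw [segB, segment_eq_image]
  constructor
  · rintro ⟨s, hs, rfl⟩
    exact ⟨s, hs.1, hs.2, by simp [Prod.smul_mk, Prod.mk_add_mk], by simp [Prod.smul_mk, Prod.mk_add_mk]⟩
  · rintro ⟨s, h0, h1, hp1, hp2⟩
    refine ⟨s, ⟨h0, h1⟩, ?_⟩
    simp only [Prod.smul_mk, Prod.mk_add_mk, smul_eq_mul]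
    exact Prod.ext hp1.symm hp2.symm

lemma SH_iff (Δ au du cu bu av dv cv bv : ℝ) :
    (segB Δ au du cu bu ∩ setShadow (segB Δ av dv cv bv)).Nonempty ↔
    ∃ s t : ℝ, 0 ≤ s ∧ s ≤ 1 ∧ 0 ≤ t ∧ t ≤ 1 ∧
      (1-s)*au + s*du ≤ (1-t)*av + t*dv ∧
      (1-t)*cv + t*bv ≤ (1-s)*cu + s*bu := by
  constructor
  · rintro ⟨p, hp, hps⟩
    rw [mem_segB_iff] at hp
    obtain ⟨s, hs0, hs1, hp1, hp2⟩ := hp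
    simp only [setShadow, mem_iUnion, exists_prop] at hps
    obtain ⟨q, hq, hpq⟩ := hps
    rw [mem_segB_iff] at hq
    obtain ⟨t, ht0, ht1, hq1, hq2⟩ := hq
    obtain ⟨h1, h2⟩ := hpq
    refine ⟨s, t, hs0, hs1, ht0, ht1, ?_, ?_⟩
    · rw [hp1, hq1] at h1; exact h1
    · rw [hp1, hp2, hq1, hq2] at h2; ring_nf at h2 ⊢; linarith
  · rintro ⟨s, t, hs0, hs1, ht0, ht1, hB, hT⟩
    refine ⟨((1-s)*au + s*du, (1-s)*(Δ-(cu-au)) + s*(Δ-(bu-du))), ?_, ?_⟩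
    · rw [mem_segB_iff]; exact ⟨s, hs0, hs1, rfl, rfl⟩
    · simp only [setShadow, mem_iUnion, exists_prop]
      refine ⟨((1-t)*av + t*dv, (1-t)*(Δ-(cv-av)) + t*(Δ-(bv-dv))), ?_, ?_⟩
      · rw [mem_segB_iff]; exact ⟨t, ht0, ht1, rfl, rfl⟩
      · constructor
        · exact hB
        · simp only; ring_nf; ring_nf at hT; linarith

lemma traps_aux {au du cu bu av dv cv bv : ℝ}
    (hu1 : au ≤ du) (hu2 : cu ≤ bu) (hv1 : av ≤ dv) (hv2 : cv ≤ bv)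
    (h1 : au ≤ dv) (h2 : cv ≤ bu) :
    (trapB au du cu bu ∩ trapB av dv cv bv).Nonempty := by
  rcases le_or_gt av du with hb | hb
  · refine ⟨(max au av, 0), ?_, ?_⟩
    · exact mem_trapB_of hu1 hu2 le_rfl zero_le_one
        (by norm_num) (by norm_num; exact ⟨hu1, hb⟩)
    · exact mem_trapB_of hv1 hv2 le_rfl zero_le_one
        (by norm_num) (by norm_num; exact ⟨h1, hv1⟩)
  · set D := (av - du) + (bu - cv) with hDdef
    have hD : 0 < D := by simp only [hDdef]; linarith
    set y := (av - du)/D with hydef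
    have hy0 : 0 ≤ y := div_nonneg (by linarith) hD.le
    have hy1 : y ≤ 1 := by rw [hydef, div_le_one hD]; simp only [hDdef]; linarith
    have key : y * D = av - du := div_mul_cancel₀ _ hD.ne'
    have geq : (1-y)*av + y*cv = (1-y)*du + y*bu := by
      simp only [hDdef] at key; linear_combination -key
    have fle : (1-y)*au + y*cu ≤ (1-y)*dv + y*bv := by
      simp only [hDdef] at key
      nlinarith [mul_nonneg (by linarith : (0:ℝ) ≤ 1-y)
          (by linarith : (0:ℝ) ≤ (du-au)+(dv-av)),
        mul_nonneg hy0 (by linarith : (0:ℝ) ≤ (bu-cu)+(bv-cv))]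
    refine ⟨(max ((1-y)*au + y*cu) ((1-y)*av + y*cv), y), ?_, ?_⟩
    · refine mem_trapB_of hu1 hu2 hy0 hy1 (le_max_left _ _) (max_le ?_ geq.le)
      nlinarith [mul_nonneg (by linarith : (0:ℝ) ≤ 1-y) (by linarith : (0:ℝ) ≤ du-au),
        mul_nonneg hy0 (by linarith : (0:ℝ) ≤ bu-cu)]
    · refine mem_trapB_of hv1 hv2 hy0 hy1 (le_max_right _ _) (max_le fle ?_)
      nlinarith [mul_nonneg (by linarith : (0:ℝ) ≤ 1-y) (by linarith : (0:ℝ) ≤ dv-av),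
        mul_nonneg hy0 (by linarith : (0:ℝ) ≤ bv-cv)]

lemma trap_iff {au du cu bu av dv cv bv : ℝ}
    (hu1 : au ≤ du) (hu2 : cu ≤ bu) (hv1 : av ≤ dv) (hv2 : cv ≤ bv) :
    (trapB au du cu bu ∩ trapB av dv cv bv).Nonempty ↔
      ((au ≤ dv ∨ cu ≤ bv) ∧ (av ≤ du ∨ cv ≤ bu)) := by
  constructor
  · rintro ⟨p, hpu, hpv⟩
    obtain ⟨hy0, hy1, hulo, huhi⟩ := trapB_bounds hu1 hu2 hpu
    obtain ⟨-, -, hvlo, hvhi⟩ := trapB_bounds hv1 hv2 hpv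
    constructor
    · by_contra h
      push_neg at h
      obtain ⟨hdv, hbv⟩ := h
      have key : (1-p.2)*au + p.2*cu ≤ (1-p.2)*dv + p.2*bv := le_trans hulo hvhi
      rcases eq_or_lt_of_le hy1 with h1'|h1'
      · rw [← h1'] at key; nlinarith [key]
      · nlinarith [mul_pos (by linarith : (0:ℝ) < 1 - p.2) (by linarith : (0:ℝ) < au - dv),
          mul_nonneg hy0 (by linarith : (0:ℝ) ≤ cu - bv)]
    · by_contra h
      push_neg at h
      obtain ⟨hdu, hbu⟩ := h
      have key : (1-p.2)*av + p.2*cv ≤ (1-p.2)*du + p.2*bu := le_trans hvlo huhi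
      rcases eq_or_lt_of_le hy1 with h1'|h1'
      · rw [← h1'] at key; nlinarith [key]
      · nlinarith [mul_pos (by linarith : (0:ℝ) < 1 - p.2) (by linarith : (0:ℝ) < av - du),
          mul_nonneg hy0 (by linarith : (0:ℝ) ≤ cv - bu)]
  · rintro ⟨hC1, hC2⟩
    rcases hC1 with h1 | h1 <;> rcases hC2 with h2 | h2
    · refine ⟨(max au av, 0), ?_, ?_⟩
      · exact mem_trapB_of hu1 hu2 le_rfl zero_le_one
          (by norm_num) (by norm_num; exact ⟨hu1, h2⟩)
      · exact mem_trapB_of hv1 hv2 le_rfl zero_le_one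
          (by norm_num) (by norm_num; exact ⟨h1, hv1⟩)
    · exact traps_aux hu1 hu2 hv1 hv2 h1 h2
    · rw [Set.inter_comm]
      exact traps_aux hv1 hv2 hu1 hu2 h2 h1
    · refine ⟨(max cu cv, 1), ?_, ?_⟩
      · exact mem_trapB_of hu1 hu2 zero_le_one le_rfl
          (by norm_num) (by norm_num; exact ⟨hu2, h2⟩)
      · exact mem_trapB_of hv1 hv2 zero_le_one le_rfl
          (by norm_num) (by norm_num; exact ⟨h1, hv2⟩)

lemma tops_overlap {au du cu bu av dv cv bv : ℝ}
    (hcu : cu < bu) (hcv : cv < bv) (h4 : cu ≤ bv) (h2 : cv ≤ bu) :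
    (∃ s t : ℝ, 0 ≤ s ∧ s ≤ 1 ∧ 0 ≤ t ∧ t ≤ 1 ∧
        (1-s)*au + s*du ≤ (1-t)*av + t*dv ∧ (1-t)*cv + t*bv ≤ (1-s)*cu + s*bu) ∨
      (∃ s t : ℝ, 0 ≤ s ∧ s ≤ 1 ∧ 0 ≤ t ∧ t ≤ 1 ∧
        (1-s)*av + s*dv ≤ (1-t)*au + t*du ∧ (1-t)*cu + t*bu ≤ (1-s)*cv + s*bv) := by
  set m := max cu cv with hm
  have hm1 : cu ≤ m := le_max_left _ _
  have hm2 : cv ≤ m := le_max_right _ _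
  have hmu : m ≤ bu := max_le hcu.le h2
  have hmv : m ≤ bv := max_le h4 hcv.le
  set s := (m - cu)/(bu - cu) with hs
  set t := (m - cv)/(bv - cv) with ht
  have hs0 : 0 ≤ s := div_nonneg (by linarith) (by linarith)
  have hs1 : s ≤ 1 := by rw [hs, div_le_one (by linarith)]; linarith
  have ht0 : 0 ≤ t := div_nonneg (by linarith) (by linarith)
  have ht1 : t ≤ 1 := by rw [ht, div_le_one (by linarith)]; linarith
  have hTu : (1-s)*cu + s*bu = m := by
    have := div_mul_cancel₀ (m - cu) (by linarith : bu - cu ≠ 0)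
    rw [hs]; linear_combination this
  have hTv : (1-t)*cv + t*bv = m := by
    have := div_mul_cancel₀ (m - cv) (by linarith : bv - cv ≠ 0)
    rw [ht]; linear_combination this
  rcases le_total ((1-s)*au + s*du) ((1-t)*av + t*dv) with h | h
  · exact Or.inl ⟨s, t, hs0, hs1, ht0, ht1, h, by rw [hTu, hTv]⟩
  · exact Or.inr ⟨t, s, ht0, ht1, hs0, hs1, h, by rw [hTu, hTv]⟩

lemma C_iff_SH {au du cu bu av dv cv bv : ℝ}
    (hu1 : au ≤ du) (hu2 : cu ≤ bu) (hv1 : av ≤ dv) (hv2 : cv ≤ bv)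
    (hau : au < du) (hcu : cu < bu) (hav : av < dv) (hcv : cv < bv) :
    ((au ≤ dv ∨ cu ≤ bv) ∧ (av ≤ du ∨ cv ≤ bu)) ↔
      ((∃ s t : ℝ, 0 ≤ s ∧ s ≤ 1 ∧ 0 ≤ t ∧ t ≤ 1 ∧
          (1-s)*au + s*du ≤ (1-t)*av + t*dv ∧ (1-t)*cv + t*bv ≤ (1-s)*cu + s*bu) ∨
        (∃ s t : ℝ, 0 ≤ s ∧ s ≤ 1 ∧ 0 ≤ t ∧ t ≤ 1 ∧
          (1-s)*av + s*dv ≤ (1-t)*au + t*du ∧ (1-t)*cu + t*bu ≤ (1-s)*cv + s*bv)) := by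
  constructor
  · rintro ⟨hC1, hC2⟩
    rcases le_or_gt au dv with h1 | h1
    · rcases le_or_gt av du with h2 | h2
      · -- bottoms overlap
        set m := max au av with hm
        have hm1 : au ≤ m := le_max_left _ _
        have hm2 : av ≤ m := le_max_right _ _
        have hmu : m ≤ du := max_le hau.le h2
        have hmv : m ≤ dv := max_le h1 hav.le
        set s := (m - au)/(du - au) with hs
        set t := (m - av)/(dv - av) with ht
        have hs0 : 0 ≤ s := div_nonneg (by linarith) (by linarith)
        have hs1 : s ≤ 1 := by rw [hs, div_le_one (by linarith)]; linarith
        have ht0 : 0 ≤ t := div_nonneg (by linarith) (by linarith)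
        have ht1 : t ≤ 1 := by rw [ht, div_le_one (by linarith)]; linarith
        have hBu : (1-s)*au + s*du = m := by
          have := div_mul_cancel₀ (m - au) (by linarith : du - au ≠ 0)
          rw [hs]; linear_combination this
        have hBv : (1-t)*av + t*dv = m := by
          have := div_mul_cancel₀ (m - av) (by linarith : dv - av ≠ 0)
          rw [ht]; linear_combination this
        rcases le_total ((1-t)*cv + t*bv) ((1-s)*cu + s*bu) with h | h
        · exact Or.inl ⟨s, t, hs0, hs1, ht0, ht1, by rw [hBu, hBv], h⟩
        · exact Or.inr ⟨t, s, ht0, ht1, hs0, hs1, by rw [hBu, hBv], h⟩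
      · have h3 : cv ≤ bu := hC2.resolve_left (by linarith)
        rcases le_or_gt cu bv with h4 | h4
        · exact tops_overlap hcu hcv h4 h3
        · refine Or.inl ⟨0, 0, le_rfl, zero_le_one, le_rfl, zero_le_one, ?_, ?_⟩
          · norm_num; linarith
          · norm_num; linarith
    · have h3 : cu ≤ bv := hC1.resolve_left (by linarith)
      rcases le_or_gt cv bu with h4 | h4
      · exact tops_overlap hcu hcv h3 h4
      · refine Or.inr ⟨0, 0, le_rfl, zero_le_one, le_rfl, zero_le_one, ?_, ?_⟩
        · norm_num; linarith
        · norm_num; linarith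
  · rintro (⟨s, t, hs0, hs1, ht0, ht1, hB, hT⟩ | ⟨s, t, hs0, hs1, ht0, ht1, hB, hT⟩)
    · constructor
      · left
        nlinarith [mul_nonneg hs0 (by linarith : (0:ℝ) ≤ du - au),
          mul_nonneg (by linarith : (0:ℝ) ≤ 1 - t) (by linarith : (0:ℝ) ≤ dv - av)]
      · right
        nlinarith [mul_nonneg ht0 (by linarith : (0:ℝ) ≤ bv - cv),
          mul_nonneg (by linarith : (0:ℝ) ≤ 1 - s) (by linarith : (0:ℝ) ≤ bu - cu)]
    · constructor
      · right
        nlinarith [mul_nonneg ht0 (by linarith : (0:ℝ) ≤ bu - cu),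
          mul_nonneg (by linarith : (0:ℝ) ≤ 1 - s) (by linarith : (0:ℝ) ≤ bv - cv)]
      · left
        nlinarith [mul_nonneg hs0 (by linarith : (0:ℝ) ≤ dv - av),
          mul_nonneg (by linarith : (0:ℝ) ≤ 1 - t) (by linarith : (0:ℝ) ≤ du - au)]


/-- For two bounded vertices `u, v` in general position,
`T̄_u ∩ T̄_v ≠ ∅` iff `L_u ∩ S_{L_v} ≠ ∅` or `L_v ∩ S_{L_u} ≠ ∅`. -/
theorem stmt1 (Δ au du cu bu av dv cv bv : ℝ)
    (hu1 : au ≤ du) (hu2 : cu ≤ bu) (hu3 : au < cu) (hu4 : du < bu)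
    (hv1 : av ≤ dv) (hv2 : cv ≤ bv) (hv3 : av < cv) (hv4 : dv < bv)
    (hdist : List.Pairwise (· ≠ ·) [au, du, cu, bu, av, dv, cv, bv])
    (hdist' : List.Pairwise (· ≠ ·) [cu - au, bu - du, cv - av, bv - dv]) :
    (trapB au du cu bu ∩ trapB av dv cv bv).Nonempty ↔
      (segB Δ au du cu bu ∩ setShadow (segB Δ av dv cv bv)).Nonempty ∨
        (segB Δ av dv cv bv ∩ setShadow (segB Δ au du cu bu)).Nonempty := by
  have hau : au < du := lt_of_le_of_ne hu1 (by simp [List.pairwise_cons] at hdist; tauto)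
  have hcu : cu < bu := lt_of_le_of_ne hu2 (by simp [List.pairwise_cons] at hdist; tauto)
  have hav : av < dv := lt_of_le_of_ne hv1 (by simp [List.pairwise_cons] at hdist; tauto)
  have hcv : cv < bv := lt_of_le_of_ne hv2 (by simp [List.pairwise_cons] at hdist; tauto)
  rw [trap_iff hu1 hu2 hv1 hv2, SH_iff, SH_iff]
  exact C_iff_SH hu1 hu2 hv1 hv2 hau hcu hav hcv
end

section
/- Fix Δ ∈ ℝ, let u be a bounded vertex given by reals a_u, d_u, c_u, b_u (with a_u ≤ d_u, c_u ≤ b_u, a_u < c_u, d_u < b_u) and let v be an unbounded vertex given by reals a_v < b_v, such that the six reals a_u, d_u, c_u, b_u, a_v, b_v are pairwise distinct and the three reals c_u − a_u, b_u − d_u, b_v − a_v are pairwise distinct. Then p_v ∈ S_{L_u} if and only if either (i) a_v < a_u and T̄_u ∩ T̄_v ≠ ∅, or (ii) a_u < a_v < d_u and b_v ≥ λ·c_u + (1−λ)·b_u, where λ ∈ (0,1) is the unique real with a_v = λ·a_u + (1−λ)·d_u. In particular, if d_u < a_v then p_v ∉ S_{L_u}. -/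
/-!
A point of `L_u` is `l • (a_u, Δ - (c_u - a_u)) + (1 - l) • (d_u, Δ - (b_u - d_u))` with
`l ∈ [0, 1]`, and `p_v` lies in its shadow iff `a_v ≤ l a_u + (1 - l) d_u` and
`l c_u + (1 - l) b_u ≤ b_v`. Both right-hand sides decrease in `l`, so only the largest
admissible weight matters. When `a_v < a_u` it is `l = 1` and the condition is `c_u ≤ b_v`;
since `T̄_u` lies to the right of its left edge from `(a_u, 0)` to `(c_u, 1)`, this says exactly
that `T̄_v` meets `T̄_u`. When `a_u < a_v < d_u` it is `l = λ`, and when `d_u < a_v` no weight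
is admissible.
-/

open Set

lemma ptU_mem_setShadow_segB_iff (Δ au du cu bu av bv : ℝ) :
    ptU Δ av bv ∈ setShadow (segB Δ au du cu bu) ↔
      ∃ l ∈ Icc (0 : ℝ) 1, av ≤ l * au + (1 - l) * du ∧ l * cu + (1 - l) * bu ≤ bv := by
  simp only [setShadow, segB, ptShadow, ptU, mem_iUnion, exists_prop, mem_ofPred_eq]
  constructor
  · rintro ⟨t, ⟨l, m, hl, hm, hlm, rfl⟩, h₁, h₂⟩
    obtain rfl : m = 1 - l := by linarith
    simp only [Prod.smul_mk, Prod.mk_add_mk, smul_eq_mul] at h₁ h₂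
    exact ⟨l, ⟨hl, by linarith⟩, h₁, by linarith⟩
  · rintro ⟨l, ⟨hl₀, hl₁⟩, h₁, h₂⟩
    refine ⟨_, ⟨l, 1 - l, hl₀, by linarith, by ring, rfl⟩, ?_, ?_⟩ <;>
      simp only [Prod.smul_mk, Prod.mk_add_mk, smul_eq_mul] <;> linarith

section

variable {au du cu bu av bv : ℝ}

lemma exists_weight_iff_of_le_left (hcb : cu ≤ bu) (hav : av ≤ au) :
    (∃ l ∈ Icc (0 : ℝ) 1, av ≤ l * au + (1 - l) * du ∧ l * cu + (1 - l) * bu ≤ bv) ↔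
      cu ≤ bv := by
  constructor
  · rintro ⟨l, ⟨-, hl₁⟩, -, h⟩
    nlinarith [mul_nonneg (sub_nonneg.2 hl₁) (sub_nonneg.2 hcb)]
  · intro h
    exact ⟨1, right_mem_Icc.2 zero_le_one, by linarith, by linarith⟩

lemma exists_weight_iff_of_eq (hud : au < du) (hcb : cu ≤ bu) {l₀ : ℝ}
    (hl₀ : l₀ ∈ Icc (0 : ℝ) 1) (hav : av = l₀ * au + (1 - l₀) * du) :
    (∃ l ∈ Icc (0 : ℝ) 1, av ≤ l * au + (1 - l) * du ∧ l * cu + (1 - l) * bu ≤ bv) ↔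
      l₀ * cu + (1 - l₀) * bu ≤ bv := by
  constructor
  · rintro ⟨l, -, hl, h⟩
    have hll₀ : l ≤ l₀ := by
      by_contra! hlt
      nlinarith [mul_pos (sub_pos.2 hlt) (sub_pos.2 hud)]
    nlinarith [mul_nonneg (sub_nonneg.2 hll₀) (sub_nonneg.2 hcb)]
  · exact fun h => ⟨l₀, hl₀, hav.le, h⟩

lemma not_exists_weight_of_right_lt (hud : au ≤ du) (hda : du < av) :
    ¬ ∃ l ∈ Icc (0 : ℝ) 1, av ≤ l * au + (1 - l) * du ∧ l * cu + (1 - l) * bu ≤ bv := by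
  rintro ⟨l, ⟨hl₀, -⟩, h, -⟩
  nlinarith [mul_nonneg hl₀ (sub_nonneg.2 hud)]

lemma trapB_subset_right_of_left_edge (hud : au ≤ du) (hcb : cu ≤ bu) :
    trapB au du cu bu ⊆ {p | (1 - p.2) * au + p.2 * cu ≤ p.1} := by
  refine convexHull_min ?_ ?_
  · simp [insert_subset_iff, hud, hcb]
  · intro x hx y hy a b ha hb hab
    obtain rfl : b = 1 - a := by linarith
    simp only [mem_ofPred_eq, Prod.smul_fst, Prod.smul_snd, Prod.fst_add, Prod.snd_add,
      smul_eq_mul] at hx hy ⊢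
    nlinarith [mul_le_mul_of_nonneg_left hx ha, mul_le_mul_of_nonneg_left hy hb]

lemma trapB_inter_trapU_nonempty_iff (hud : au ≤ du) (hcb : cu ≤ bu) (hav : av < au) :
    (trapB au du cu bu ∩ trapU av bv).Nonempty ↔ cu ≤ bv := by
  constructor
  · rintro ⟨p, hpB, l, m, hl, hm, hlm, rfl⟩
    obtain rfl : l = 1 - m := by linarith
    have h := trapB_subset_right_of_left_edge hud hcb hpB
    simp only [mem_ofPred_eq, Prod.smul_mk, Prod.mk_add_mk, smul_eq_mul] at h
    have hm₀ : 0 < m := by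
      by_contra! hm₀
      obtain rfl : m = 0 := le_antisymm hm₀ hm
      linarith
    have : m * cu ≤ m * bv := by
      nlinarith [mul_le_mul_of_nonneg_left hav.le hl]
    exact le_of_mul_le_mul_left this hm₀
  · intro hcv
    have hden : 0 < au - av + (bv - cu) := by linarith
    -- the height at which `T̄_v` crosses the left edge of `T̄_u`
    set y := (au - av) / (au - av + (bv - cu))
    have hy₀ : 0 ≤ y := div_nonneg (by linarith) hden.le
    have hy₁ : y ≤ 1 := (div_le_one hden).2 (by linarith)
    have hcross : (1 - y) * au + y * cu = (1 - y) * av + y * bv := by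
      simp only [y]
      field_simp
      ring
    refine ⟨((1 - y) * au + y * cu, y), ?_, ?_⟩
    · refine segment_subset_convexHull (x := (au, 0)) (y := (cu, 1)) (by simp) (by simp)
        ⟨1 - y, y, by linarith, hy₀, by ring, ?_⟩
      simp
    · refine ⟨1 - y, y, by linarith, hy₀, by ring, ?_⟩
      simp [hcross]

end

theorem stmt2_general (Δ au du cu bu av bv : ℝ)
    (hu1 : au ≤ du) (hu2 : cu ≤ bu)
    (hdist : List.Pairwise (· ≠ ·) [au, du, cu, bu, av, bv]) :
    (ptU Δ av bv ∈ setShadow (segB Δ au du cu bu) ↔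
      (av < au ∧ (trapB au du cu bu ∩ trapU av bv).Nonempty) ∨
        (au < av ∧ av < du ∧ ∃ lam : ℝ, 0 < lam ∧ lam < 1 ∧
          av = lam * au + (1 - lam) * du ∧ lam * cu + (1 - lam) * bu ≤ bv)) ∧
    (du < av → ptU Δ av bv ∉ setShadow (segB Δ au du cu bu)) := by
  have hau : au ≠ av := List.rel_of_pairwise_cons hdist (by simp)
  have hdu : du ≠ av := List.rel_of_pairwise_cons hdist.of_cons (by simp)
  rw [ptU_mem_setShadow_segB_iff]
  refine ⟨?_, fun hda => not_exists_weight_of_right_lt hu1 hda⟩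
  rcases lt_or_gt_of_ne hau.symm with hlt | hgt
  · rw [trapB_inter_trapU_nonempty_iff hu1 hu2 hlt, exists_weight_iff_of_le_left hu2 hlt.le]
    simp [hlt, hlt.not_gt]
  rcases lt_or_gt_of_ne hdu.symm with hlt | hda
  · obtain ⟨l₀, m, hl₀, hm, hlm, hrep⟩ : av ∈ openSegment ℝ au du := by
      rw [openSegment_eq_Ioo (hgt.trans hlt)]
      exact ⟨hgt, hlt⟩
    obtain rfl : m = 1 - l₀ := by linarith
    constructor
    · intro h
      refine .inr ⟨hgt, hlt, l₀, hl₀, by linarith, hrep.symm, ?_⟩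
      exact (exists_weight_iff_of_eq (hgt.trans hlt) hu2 ⟨hl₀.le, by linarith⟩ hrep.symm).1 h
    · rintro (⟨h, -⟩ | ⟨-, -, l, hl₀, hl₁, hrep, hl⟩)
      · linarith
      · exact (exists_weight_iff_of_eq (hgt.trans hlt) hu2 ⟨hl₀.le, hl₁.le⟩ hrep).2 hl
  · refine iff_of_false (not_exists_weight_of_right_lt hu1 hda) ?_
    rintro (⟨h, -⟩ | ⟨-, h, -⟩) <;> linarith

/-- For a bounded vertex `u` and an unbounded vertex `v` in general
position: `p_v ∈ S_{L_u}` iff either (i) `a_v < a_u` and `T̄_u ∩ T̄_v ≠ ∅`, or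
(ii) `a_u < a_v < d_u` and `b_v ≥ λ·c_u + (1−λ)·b_u` for the unique `λ ∈ (0,1)` with
`a_v = λ·a_u + (1−λ)·d_u`. In particular, if `d_u < a_v` then `p_v ∉ S_{L_u}`. -/
theorem stmt2 (Δ au du cu bu av bv : ℝ)
    (hu1 : au ≤ du) (hu2 : cu ≤ bu) (hu3 : au < cu) (hu4 : du < bu)
    (hv : av < bv)
    (hdist : List.Pairwise (· ≠ ·) [au, du, cu, bu, av, bv])
    (hdist' : List.Pairwise (· ≠ ·) [cu - au, bu - du, bv - av]) :
    (ptU Δ av bv ∈ setShadow (segB Δ au du cu bu) ↔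
      (av < au ∧ (trapB au du cu bu ∩ trapU av bv).Nonempty) ∨
        (au < av ∧ av < du ∧ ∃ lam : ℝ, 0 < lam ∧ lam < 1 ∧
          av = lam * au + (1 - lam) * du ∧ lam * cu + (1 - lam) * bu ≤ bv)) ∧
    (du < av → ptU Δ av bv ∉ setShadow (segB Δ au du cu bu)) :=
  stmt2_general Δ au du cu bu av bv hu1 hu2 hdist
end

section
/- Fix Δ ∈ ℝ, let u be a bounded vertex given by reals a_u, d_u, c_u, b_u (with a_u ≤ d_u, c_u ≤ b_u, a_u < c_u, d_u < b_u) and let v be an unbounded vertex given by reals a_v < b_v, such that the six reals a_u, d_u, c_u, b_u, a_v, b_v are pairwise distinct and the three reals c_u − a_u, b_u − d_u, b_v − a_v are pairwise distinct. Assume p_v ∉ S_{L_u}. Then T̄_u ∩ T̄_v ≠ ∅ if and only if L_u ∩ S_{p_v} ≠ ∅. -/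
open Set

lemma seg_param (x y z : ℝ × ℝ) :
    z ∈ segment ℝ x y ↔ ∃ l : ℝ, 0 ≤ l ∧ l ≤ 1 ∧
      z = ((1-l)*x.1 + l*y.1, (1-l)*x.2 + l*y.2) := by
  constructor
  · rintro ⟨a, b, ha, hb, hab, rfl⟩
    refine ⟨b, hb, by linarith, ?_⟩
    have h : a = 1 - b := by linarith
    subst h
    simp [Prod.ext_iff, smul_eq_mul]
  · rintro ⟨l, h0, h1, rfl⟩
    exact ⟨1-l, l, by linarith, h0, by ring, by simp [Prod.ext_iff, smul_eq_mul]⟩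

lemma combo_pos {s p q : ℝ} (h0 : 0 ≤ s) (h1 : s ≤ 1) (hp : 0 < p) (hq : 0 < q) :
    0 < (1-s)*p + s*q := by
  rcases eq_or_lt_of_le h0 with rfl | hs
  · simpa using hp
  · nlinarith [mul_pos hs hq, mul_nonneg (by linarith : (0:ℝ) ≤ 1-s) hp.le]

lemma trapB_sub {au du cu bu : ℝ} (hu1 : au ≤ du) (hu2 : cu ≤ bu) :
    trapB au du cu bu ⊆
      {p : ℝ×ℝ | 0 ≤ p.2 ∧ p.2 ≤ 1 ∧ au + p.2*(cu-au) ≤ p.1 ∧ p.1 ≤ du + p.2*(bu-du)} := by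
  apply convexHull_min
  · rintro p (rfl|rfl|rfl|rfl) <;> simp only [mem_setOf_eq] <;> norm_num <;>
      first | linarith | (constructor <;> linarith)
  · rintro p ⟨hp1, hp2, hp3, hp4⟩ q ⟨hq1, hq2, hq3, hq4⟩ a b ha hb hab
    have hb' : b = 1 - a := by linarith
    subst hb'
    have e1 : (a • p + (1-a) • q).1 = a*p.1 + (1-a)*q.1 := by simp [smul_eq_mul]
    have e2 : (a • p + (1-a) • q).2 = a*p.2 + (1-a)*q.2 := by simp [smul_eq_mul]
    refine ⟨?_, ?_, ?_, ?_⟩ <;> simp only [e1, e2] <;>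
      nlinarith [mul_le_mul_of_nonneg_left hp3 ha, mul_le_mul_of_nonneg_left hq3 hb,
        mul_le_mul_of_nonneg_left hp4 ha, mul_le_mul_of_nonneg_left hq4 hb,
        mul_nonneg ha hp1, mul_nonneg hb hq1,
        mul_le_mul_of_nonneg_left hp2 ha, mul_le_mul_of_nonneg_left hq2 hb]

lemma mem_trapB {au du cu bu : ℝ} {s x : ℝ}
    (h0 : 0 ≤ s) (h1 : s ≤ 1) (hl : au + s*(cu-au) ≤ x) (hr : x ≤ du + s*(bu-du)) :
    (x, s) ∈ trapB au du cu bu := by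
  have hconv := convex_convexHull ℝ ({(au, 0), (du, 0), (cu, 1), (bu, 1)} : Set (ℝ × ℝ))
  have hsub := subset_convexHull ℝ ({(au, 0), (du, 0), (cu, 1), (bu, 1)} : Set (ℝ × ℝ))
  have hP1 : ((au + s*(cu-au), s) : ℝ×ℝ) ∈ trapB au du cu bu := by
    apply hconv.segment_subset (hsub (show ((au,0):ℝ×ℝ) ∈ _ by simp))
      (hsub (show ((cu,1):ℝ×ℝ) ∈ _ by simp))
    rw [seg_param]
    exact ⟨s, h0, h1, Prod.ext_iff.mpr ⟨by ring, by ring⟩⟩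
  have hP2 : ((du + s*(bu-du), s) : ℝ×ℝ) ∈ trapB au du cu bu := by
    apply hconv.segment_subset (hsub (show ((du,0):ℝ×ℝ) ∈ _ by simp))
      (hsub (show ((bu,1):ℝ×ℝ) ∈ _ by simp))
    rw [seg_param]
    exact ⟨s, h0, h1, Prod.ext_iff.mpr ⟨by ring, by ring⟩⟩
  apply hconv.segment_subset hP1 hP2
  have hx : x ∈ segment ℝ (au + s*(cu-au)) (du + s*(bu-du)) := by
    rw [segment_eq_Icc (by linarith)]
    exact ⟨hl, hr⟩
  obtain ⟨a, b, ha, hb, hab, hxe⟩ := hx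
  have ha' : a = 1 - b := by linarith
  subst ha'
  simp only [smul_eq_mul] at hxe
  rw [seg_param]
  exact ⟨b, hb, by linarith, Prod.ext_iff.mpr ⟨hxe.symm, by ring⟩⟩

/-- For a bounded vertex `u` and an unbounded vertex `v` in general
position with `p_v ∉ S_{L_u}` (i.e. `u` and `v` are non-adjacent):
`T̄_u ∩ T̄_v ≠ ∅` iff `L_u ∩ S_{p_v} ≠ ∅` (i.e. `u` is a hovering vertex of `v`). -/
theorem stmt3 (Δ au du cu bu av bv : ℝ)
    (hu1 : au ≤ du) (hu2 : cu ≤ bu) (hu3 : au < cu) (hu4 : du < bu)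
    (hv : av < bv)
    (hdist : List.Pairwise (· ≠ ·) [au, du, cu, bu, av, bv])
    (hdist' : List.Pairwise (· ≠ ·) [cu - au, bu - du, bv - av])
    (hnadj : ptU Δ av bv ∉ setShadow (segB Δ au du cu bu)) :
    (trapB au du cu bu ∩ trapU av bv).Nonempty ↔
      (segB Δ au du cu bu ∩ ptShadow (ptU Δ av bv)).Nonempty := by
  have hnAa : au ≠ av := by
    simp only [List.pairwise_cons] at hdist; exact hdist.1 av (by simp)
  have hnDa : du ≠ av := by
    simp only [List.pairwise_cons] at hdist; exact hdist.2.1 av (by simp)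
  have hnCb : cu ≠ bv := by
    simp only [List.pairwise_cons] at hdist; exact hdist.2.2.1 bv (by simp)
  have hnBb : bu ≠ bv := by
    simp only [List.pairwise_cons] at hdist; exact hdist.2.2.2.1 bv (by simp)
  have hnadj' : ∀ l : ℝ, 0 ≤ l → l ≤ 1 → av ≤ (1-l)*au + l*du →
      (1-l)*cu + l*bu ≤ bv → False := by
    intro l h0 h1 hf hg
    apply hnadj
    rw [setShadow, mem_iUnion₂]
    refine ⟨((1-l)*au + l*du, (1-l)*(Δ-(cu-au)) + l*(Δ-(bu-du))), ?_, ?_, ?_⟩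
    · rw [segB, seg_param]; exact ⟨l, h0, h1, rfl⟩
    · exact hf
    · show (ptU Δ av bv).2 - (ptU Δ av bv).1 ≤ _
      simp only [ptU]
      nlinarith [hg]
  have hRHS : (segB Δ au du cu bu ∩ ptShadow (ptU Δ av bv)).Nonempty ↔
      ∃ l, 0 ≤ l ∧ l ≤ 1 ∧ (1-l)*au + l*du ≤ av ∧ bv ≤ (1-l)*cu + l*bu := by
    constructor
    · rintro ⟨t, ht, hs1, hs2⟩
      rw [segB, seg_param] at ht
      obtain ⟨l, h0, h1, rfl⟩ := ht
      simp only [ptU] at hs1 hs2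
      exact ⟨l, h0, h1, hs1, by nlinarith [hs2]⟩
    · rintro ⟨l, h0, h1, hf, hg⟩
      refine ⟨((1-l)*au + l*du, (1-l)*(Δ-(cu-au)) + l*(Δ-(bu-du))), ?_, hf, ?_⟩
      · rw [segB, seg_param]; exact ⟨l, h0, h1, rfl⟩
      · show _ - _ ≤ (ptU Δ av bv).2 - (ptU Δ av bv).1
        simp only [ptU]
        nlinarith [hg]
  have hLHS : (trapB au du cu bu ∩ trapU av bv).Nonempty ↔
      ∃ s, 0 ≤ s ∧ s ≤ 1 ∧ au + s*(cu-au) ≤ (1-s)*av + s*bv ∧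
        (1-s)*av + s*bv ≤ du + s*(bu-du) := by
    constructor
    · rintro ⟨q, hqB, hqU⟩
      rw [trapU, seg_param] at hqU
      obtain ⟨s, h0, h1, rfl⟩ := hqU
      have hB := trapB_sub hu1 hu2 hqB
      norm_num at hB
      exact ⟨s, h0, h1, by nlinarith [hB.2.2.1], by nlinarith [hB.2.2.2]⟩
    · rintro ⟨s, h0, h1, hl, hr⟩
      refine ⟨((1-s)*av + s*bv, s), mem_trapB h0 h1 hl hr, ?_⟩
      rw [trapU, seg_param]
      exact ⟨s, h0, h1, Prod.ext_iff.mpr ⟨rfl, by ring⟩⟩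
  rw [hLHS, hRHS]
  rcases lt_or_gt_of_ne hnAa with hAa | hAa
  · -- au < av
    rcases lt_or_gt_of_ne hnBb with hBb | hBb
    · -- bu < bv : both sides false
      have hda : du < av := by
        by_contra hc
        push_neg at hc
        exact hnadj' 1 zero_le_one le_rfl (by nlinarith) (by nlinarith)
      constructor
      · rintro ⟨s, h0, h1, -, hr⟩
        exfalso
        nlinarith [combo_pos h0 h1 (show (0:ℝ) < av - du by linarith)
          (show (0:ℝ) < bv - bu by linarith)]
      · rintro ⟨l, h0, h1, -, hg⟩
        exfalso
        nlinarith [mul_nonneg (by linarith : (0:ℝ) ≤ 1-l) (by linarith : (0:ℝ) ≤ bu - cu)]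
    · -- bv < bu : both sides true
      refine iff_of_true ?_ ?_
      · rcases lt_or_gt_of_ne hnDa with hDa | hDa
        · -- du < av
          rcases lt_or_gt_of_ne hnCb with hCb | hCb
          · -- cu < bv : s = 1
            exact ⟨1, zero_le_one, le_rfl, by nlinarith, by nlinarith⟩
          · -- bv < cu : crossing point
            have hden : 0 < (av - du) + (bu - bv) := by linarith
            set s := (av - du)/((av - du) + (bu - bv)) with hs
            have key : s * ((av-du)+(bu-bv)) = av - du := div_mul_cancel₀ _ hden.ne'
            have h1' : s * ((av-au)+(cu-bv)) ≤ av - au := by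
              rw [hs, div_mul_eq_mul_div, div_le_iff₀ hden]
              nlinarith [mul_le_mul (show av-du ≤ av-au by linarith)
                (show cu-bv ≤ bu-bv by linarith) (show (0:ℝ) ≤ cu-bv by linarith)
                (show (0:ℝ) ≤ av-au by linarith)]
            refine ⟨s, div_nonneg (by linarith) hden.le,
              (div_le_one hden).mpr (by linarith), ?_, ?_⟩
            · nlinarith [h1']
            · nlinarith [key]
        · -- av < du : s = 0
          exact ⟨0, le_rfl, zero_le_one, by nlinarith, by nlinarith⟩
      · rcases lt_or_gt_of_ne hnCb with hCb | hCb
        · -- cu < bv : l = (bv-cu)/(bu-cu)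
          have hden : 0 < bu - cu := by linarith
          set l := (bv - cu)/(bu - cu) with hld
          have h0 : 0 ≤ l := div_nonneg (by linarith) hden.le
          have h1 : l ≤ 1 := (div_le_one hden).mpr (by linarith)
          have hG : (1-l)*cu + l*bu = bv := by
            have h := div_mul_cancel₀ (bv - cu) hden.ne'
            linear_combination h
          refine ⟨l, h0, h1, ?_, le_of_eq hG.symm⟩
          by_contra hc
          push_neg at hc
          exact hnadj' l h0 h1 hc.le (le_of_eq hG)
        · -- bv < cu : l = 0
          exact ⟨0, le_rfl, zero_le_one, by nlinarith, by nlinarith⟩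
  · -- av < au : both sides false
    have hcb : bv < cu := by
      by_contra hc
      push_neg at hc
      exact hnadj' 0 le_rfl zero_le_one (by nlinarith) (by nlinarith)
    constructor
    · rintro ⟨s, h0, h1, hl, -⟩
      exfalso
      nlinarith [combo_pos h0 h1 (show (0:ℝ) < au - av by linarith)
        (show (0:ℝ) < cu - bv by linarith)]
    · rintro ⟨l, h0, h1, hf, -⟩
      exfalso
      nlinarith [mul_nonneg h0 (by linarith : (0:ℝ) ≤ du - au)]
end
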